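/- Let σ₁, σ₂ > 0 and μ > 0. The linear map H on 3×2 matrices defined in the SVD frame by H(U M Vᵀ) = μ·U M Vᵀ + 3μ(σ₁σ₂)⁻⁴ ⟨G, U M Vᵀ⟩ G − μ(σ₁σ₂)⁻³ H₃(U M Vᵀ), where G = U[[σ₂,0],[0,σ₁],[0,0]]Vᵀ and H₃ is as above, satisfies: U[[0,0],[0,0],[1,0]]Vᵀ is an eigenmatrix with eigenvalue μ − μ(σ₁σ₂)⁻³(σ₂/σ₁), and U[[0,0],[0,0],[0,1]]Vᵀ is an eigenmatrix with eigenvalue μ − μ(σ₁σ₂)⁻³(σ₁/σ₂). -/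
import Mathlib

open Matrix

/-- Frobenius inner product. -/
def frob (A B : Matrix (Fin 3) (Fin 2) ℝ) : ℝ := Matrix.trace (Aᵀ * B)

/-- Hessian of I₃ in the SVD frame, as a map on 3×2 matrices. -/
noncomputable def H3 (U : Matrix (Fin 3) (Fin 3) ℝ) (V : Matrix (Fin 2) (Fin 2) ℝ)
    (σ₁ σ₂ : ℝ) (A : Matrix (Fin 3) (Fin 2) ℝ) : Matrix (Fin 3) (Fin 2) ℝ :=
  let M := Uᵀ * A * V
  U * !![M 1 1, -M 1 0; -M 0 1, M 0 0;
         (σ₂ / σ₁) * M 2 0, (σ₁ / σ₂) * M 2 1] * Vᵀ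

/-- Hessian of the incompressible neo-Hookean membrane energy in the SVD frame. -/
noncomputable def Hneo (U : Matrix (Fin 3) (Fin 3) ℝ) (V : Matrix (Fin 2) (Fin 2) ℝ)
    (σ₁ σ₂ μ : ℝ) (A : Matrix (Fin 3) (Fin 2) ℝ) : Matrix (Fin 3) (Fin 2) ℝ :=
  let G : Matrix (Fin 3) (Fin 2) ℝ := U * !![σ₂, 0; 0, σ₁; 0, 0] * Vᵀ
  μ • A + (3 * μ * (σ₁ * σ₂)⁻¹ ^ 4 * frob G A) • G - (μ * (σ₁ * σ₂)⁻¹ ^ 3) • H3 U V σ₁ σ₂ A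

lemma sandwich (U : Matrix (Fin 3) (Fin 3) ℝ) (V : Matrix (Fin 2) (Fin 2) ℝ)
    (hU : Uᵀ * U = 1) (hV : Vᵀ * V = 1) (X : Matrix (Fin 3) (Fin 2) ℝ) :
    Uᵀ * (U * X * Vᵀ) * V = X := by
  have hV' : Vᵀ * V = 1 := hV
  calc Uᵀ * (U * X * Vᵀ) * V = (Uᵀ * U) * X * (Vᵀ * V) := by
        simp only [Matrix.mul_assoc]
      _ = X := by rw [hU, hV, Matrix.one_mul, Matrix.mul_one]

lemma frob_sandwich (U : Matrix (Fin 3) (Fin 3) ℝ) (V : Matrix (Fin 2) (Fin 2) ℝ)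
    (hU : Uᵀ * U = 1) (hV : Vᵀ * V = 1) (X Y : Matrix (Fin 3) (Fin 2) ℝ) :
    frob (U * X * Vᵀ) (U * Y * Vᵀ) = frob X Y := by
  unfold frob
  have h1 : (U * X * Vᵀ)ᵀ * (U * Y * Vᵀ) = V * (Xᵀ * Y) * Vᵀ := by
    simp only [Matrix.transpose_mul, Matrix.transpose_transpose, Matrix.mul_assoc]
    rw [← Matrix.mul_assoc Uᵀ U (Y * Vᵀ), hU, Matrix.one_mul]
  rw [h1, Matrix.trace_mul_comm, ← Matrix.mul_assoc, hV, Matrix.one_mul]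

theorem neo_hookean_normal_eigenpairs (U : Matrix (Fin 3) (Fin 3) ℝ)
    (V : Matrix (Fin 2) (Fin 2) ℝ) (hU : Uᵀ * U = 1) (hV : Vᵀ * V = 1)
    (σ₁ σ₂ μ : ℝ) (hσ₁ : 0 < σ₁) (hσ₂ : 0 < σ₂) (hμ : 0 < μ) :
    Hneo U V σ₁ σ₂ μ (U * !![(0:ℝ), 0; 0, 0; 1, 0] * Vᵀ)
        = (μ - μ * (σ₁ * σ₂)⁻¹ ^ 3 * (σ₂ / σ₁)) • (U * !![(0:ℝ), 0; 0, 0; 1, 0] * Vᵀ)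
      ∧ Hneo U V σ₁ σ₂ μ (U * !![(0:ℝ), 0; 0, 0; 0, 1] * Vᵀ)
        = (μ - μ * (σ₁ * σ₂)⁻¹ ^ 3 * (σ₁ / σ₂)) • (U * !![(0:ℝ), 0; 0, 0; 0, 1] * Vᵀ) := by
  constructor
  · unfold Hneo H3
    dsimp only
    rw [sandwich U V hU hV, frob_sandwich U V hU hV]
    have hf : frob !![σ₂, 0; 0, σ₁; 0, 0] !![(0:ℝ), 0; 0, 0; 1, 0] = 0 := by
      simp [frob, Matrix.trace_fin_two, Matrix.mul_apply, Fin.sum_univ_succ]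
    rw [hf]
    have hm : (!![(!![(0:ℝ), 0; 0, 0; 1, 0]) 1 1, -(!![(0:ℝ), 0; 0, 0; 1, 0]) 1 0;
        -(!![(0:ℝ), 0; 0, 0; 1, 0]) 0 1, (!![(0:ℝ), 0; 0, 0; 1, 0]) 0 0;
        σ₂ / σ₁ * (!![(0:ℝ), 0; 0, 0; 1, 0]) 2 0, σ₁ / σ₂ * (!![(0:ℝ), 0; 0, 0; 1, 0]) 2 1])
        = (σ₂ / σ₁) • !![(0:ℝ), 0; 0, 0; 1, 0] := by
      ext i j; fin_cases i <;> fin_cases j <;> simp [Matrix.smul_apply, Matrix.vecHead, Matrix.vecTail]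
    rw [hm]
    rw [Matrix.mul_smul, Matrix.smul_mul, smul_smul, sub_smul]
    simp [mul_comm]
  · unfold Hneo H3
    dsimp only
    rw [sandwich U V hU hV, frob_sandwich U V hU hV]
    have hf : frob !![σ₂, 0; 0, σ₁; 0, 0] !![(0:ℝ), 0; 0, 0; 0, 1] = 0 := by
      simp [frob, Matrix.trace_fin_two, Matrix.mul_apply, Fin.sum_univ_succ]
    rw [hf]
    have hm : (!![(!![(0:ℝ), 0; 0, 0; 0, 1]) 1 1, -(!![(0:ℝ), 0; 0, 0; 0, 1]) 1 0;
        -(!![(0:ℝ), 0; 0, 0; 0, 1]) 0 1, (!![(0:ℝ), 0; 0, 0; 0, 1]) 0 0;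
        σ₂ / σ₁ * (!![(0:ℝ), 0; 0, 0; 0, 1]) 2 0, σ₁ / σ₂ * (!![(0:ℝ), 0; 0, 0; 0, 1]) 2 1])
        = (σ₁ / σ₂) • !![(0:ℝ), 0; 0, 0; 0, 1] := by
      ext i j; fin_cases i <;> fin_cases j <;> simp [Matrix.smul_apply, Matrix.vecHead, Matrix.vecTail]
    rw [hm]
    rw [Matrix.mul_smul, Matrix.smul_mul, smul_smul, sub_smul]
    simp [mul_comm]
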